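/- arXiv:2601.12640 — 5 statements merged into one kernel-verified Lean document; each statement's English description precedes it below -/
import Mathlib

section
/- Let T, S be natural numbers with 1 ≤ S ≤ T/2 and let α ∈ (0, 1). Then there exists a set G of binary sequences of length T, each of Hamming weight exactly S, such that: (i) for any two distinct a, b ∈ G, the number of coordinates where both a and b equal 1 is at most α·S; and (ii) log₂|G| ≥ log₂ C(T, S) − log₂ C(T, ⌈(1−α)S⌉ − 1) − S, where C(a,b) denotes the binomial coefficient. (Gilbert's bound for constant weight sequences.) -/
open Finset

/-- A probability mass function (probability distribution) on a finite type. -/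
def IsPMF {α : Type*} [Fintype α] (Q : α → ℝ) : Prop :=
  (∀ x, 0 ≤ Q x) ∧ ∑ x, Q x = 1

/-- A channel assigns to each input a probability distribution on outputs. -/
def IsChannel {α β : Type*} [Fintype β] (W : α → β → ℝ) : Prop :=
  ∀ x, (∀ y, 0 ≤ W x y) ∧ ∑ y, W x y = 1

/-- `QW(D) = ∑_x Q(x) · W(D|x)`. -/
noncomputable def outProb {α β : Type*} [Fintype α] (W : α → β → ℝ) (Q : α → ℝ)
    (D : Finset β) : ℝ :=
  ∑ x, Q x * ∑ y ∈ D, W x y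

/-- The Hamming weight of a Boolean function: the cardinality of `f⁻¹(1)`. -/
def hammingWeight {m : ℕ} (f : (Fin m → Bool) → Bool) : ℕ :=
  (Finset.univ.filter fun i => f i = true).card

/-- Boolean functions on `m` bits of Hamming weight exactly `S`. -/
def FeqNat (m S : ℕ) : Set ((Fin m → Bool) → Bool) := {f | hammingWeight f = S}

/-- Boolean functions on `m` bits of Hamming weight at most `S`. -/
def FleNat (m S : ℕ) : Set ((Fin m → Bool) → Bool) := {f | hammingWeight f ≤ S}

/-- Boolean functions on `m` bits of Hamming weight at least `S`. -/
def FgeNat (m S : ℕ) : Set ((Fin m → Bool) → Bool) := {f | S ≤ hammingWeight f}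

/-- Boolean functions on `m` bits of Hamming weight at most a real bound `S`. -/
def FleR (m : ℕ) (S : ℝ) : Set ((Fin m → Bool) → Bool) := {f | (hammingWeight f : ℝ) ≤ S}

/-- An `(n, m, ℱ, λ1, λ2)` BFC code: probability distributions `Q i` on `𝒳^n` for each
message `i ∈ {0,1}^m` and decoding sets `D f ⊆ 𝒴^n` for each `f ∈ ℱ`, such that the
false-negative error is at most `λ1` and the false-positive error is at most `λ2`. -/
def IsBFCCode {𝒳 𝒴 : Type*} [Fintype 𝒳] [Fintype 𝒴] [DecidableEq 𝒴] {n m : ℕ}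
    (W : (Fin n → 𝒳) → (Fin n → 𝒴) → ℝ)
    (ℱ : Set ((Fin m → Bool) → Bool))
    (Q : (Fin m → Bool) → (Fin n → 𝒳) → ℝ)
    (D : ((Fin m → Bool) → Bool) → Finset (Fin n → 𝒴))
    (lam1 lam2 : ℝ) : Prop :=
  (∀ i, IsPMF (Q i)) ∧
  ∀ (i : Fin m → Bool) (f : (Fin m → Bool) → Bool), f ∈ ℱ →
    (f i = true → outProb W (Q i) (D f)ᶜ ≤ lam1) ∧
    (f i = false → outProb W (Q i) (D f) ≤ lam2)

/-- An `(n, M, δ)` transmission code: distinct codewords, pairwise disjoint decoding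
sets, and decoding error at most `δ`. -/
def IsTransmissionCode {𝒳 𝒴 : Type*} [Fintype 𝒴] [DecidableEq 𝒴] {n M : ℕ}
    (W : (Fin n → 𝒳) → (Fin n → 𝒴) → ℝ)
    (u : Fin M → (Fin n → 𝒳)) (E : Fin M → Finset (Fin n → 𝒴)) (δ : ℝ) : Prop :=
  Function.Injective u ∧
  (∀ k l, k ≠ l → Disjoint (E k) (E l)) ∧
  ∀ k, ∑ y ∈ (E k)ᶜ, W (u k) y ≤ δ

/-- A family of channels `(W n)` supports rate `C` if for every `ξ > 0` and
`δ ∈ (0, 1/2)`, for every sufficiently large `n` there is an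
`(n, ⌈2^{n(C−ξ)}⌉, δ)` transmission code for `W n`. -/
def SupportsRate {𝒳 𝒴 : Type*} [Fintype 𝒴] [DecidableEq 𝒴]
    (W : ∀ n : ℕ, (Fin n → 𝒳) → (Fin n → 𝒴) → ℝ) (C : ℝ) : Prop :=
  ∀ ξ : ℝ, 0 < ξ → ∀ δ : ℝ, 0 < δ → δ < 1/2 →
    ∃ n₀ : ℕ, ∀ n ≥ n₀,
      ∃ (u : Fin ⌈(2:ℝ) ^ ((n : ℝ) * (C - ξ))⌉₊ → (Fin n → 𝒳))
        (E : Fin ⌈(2:ℝ) ^ ((n : ℝ) * (C - ξ))⌉₊ → Finset (Fin n → 𝒴)),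
        IsTransmissionCode (W n) u E δ

/-- An `(n, N, μ1, μ2)` identification (ID) code. -/
def IsIDCode {𝒳 𝒴 : Type*} [Fintype 𝒳] [Fintype 𝒴] [DecidableEq 𝒴] {n N : ℕ}
    (W : (Fin n → 𝒳) → (Fin n → 𝒴) → ℝ)
    (Q : Fin N → (Fin n → 𝒳) → ℝ) (D : Fin N → Finset (Fin n → 𝒴))
    (μ1 μ2 : ℝ) : Prop :=
  (∀ j, IsPMF (Q j)) ∧
  (∀ j, outProb W (Q j) (D j)ᶜ ≤ μ1) ∧
  (∀ l j, l ≠ j → outProb W (Q l) (D j) ≤ μ2)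

lemma count_overlap {T : ℕ} (S k : ℕ) (t : Finset (Fin T)) (ht : t.card = S) :
    ((Finset.univ.powersetCard S).filter (fun s => k ≤ (s ∩ t).card)).card
      ≤ S.choose k * T.choose (S - k) := by
  classical
  have hsub : ((Finset.univ.powersetCard S).filter (fun s => k ≤ (s ∩ t).card))
      ⊆ (t.powersetCard k).biUnion
        (fun K => (Finset.univ.powersetCard S).filter (fun s => K ⊆ s)) := by
    intro s hs
    simp only [Finset.mem_filter] at hs
    obtain ⟨K, hK, hKcard⟩ := Finset.exists_subset_card_eq hs.2
    refine Finset.mem_biUnion.2 ⟨K, ?_, ?_⟩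
    · exact Finset.mem_powersetCard.2 ⟨hK.trans Finset.inter_subset_right, hKcard⟩
    · exact Finset.mem_filter.2 ⟨hs.1, hK.trans Finset.inter_subset_left⟩
  calc _ ≤ _ := Finset.card_le_card hsub
    _ ≤ ∑ K ∈ t.powersetCard k, ((Finset.univ.powersetCard S).filter (fun s => K ⊆ s)).card :=
        Finset.card_biUnion_le
    _ ≤ ∑ _K ∈ t.powersetCard k, T.choose (S - k) := by
        refine Finset.sum_le_sum fun K hK => ?_
        obtain ⟨hKt, hKcard⟩ := Finset.mem_powersetCard.1 hK
        have hmap : ∀ s ∈ ((Finset.univ.powersetCard S).filter (fun s => K ⊆ s) : Finset _),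
            s \ K ∈ (Finset.univ.powersetCard (S - k) : Finset (Finset (Fin T))) := by
          intro s hs
          simp only [Finset.mem_filter, Finset.mem_powersetCard] at hs ⊢
          refine ⟨Finset.subset_univ _, ?_⟩
          rw [Finset.card_sdiff_of_subset hs.2, hs.1.2, hKcard]
        have hinj : Set.InjOn (· \ K)
            ((Finset.univ.powersetCard S).filter (fun s => K ⊆ s) : Finset _) := by
          intro a ha b hb hab
          simp only [Finset.coe_filter, Set.mem_setOf_eq, Finset.mem_powersetCard] at ha hb
          have h2 := congrArg (· ∪ K) hab
          simpa [Finset.sdiff_union_of_subset ha.2, Finset.sdiff_union_of_subset hb.2] using h2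
        have := Finset.card_le_card_of_injOn _ hmap hinj
        simpa [Finset.card_powersetCard, Finset.card_univ] using this
    _ = S.choose k * T.choose (S - k) := by
        rw [Finset.sum_const, Finset.card_powersetCard, ht, smul_eq_mul]

/-- Gilbert's bound for constant weight sequences: existence of a large
set of binary sequences of length `T` and Hamming weight `S` with small pairwise
overlap of their `1`-coordinates. -/
theorem gilbert_constant_weight (T S : ℕ) (hS1 : 1 ≤ S) (hS2 : 2 * S ≤ T)
    (α : ℝ) (hα0 : 0 < α) (hα1 : α < 1) :
    ∃ G : Finset (Fin T → Bool),
      (∀ a ∈ G, (Finset.univ.filter fun t => a t = true).card = S) ∧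
      (∀ a ∈ G, ∀ b ∈ G, a ≠ b →
        ((Finset.univ.filter fun t => a t = true ∧ b t = true).card : ℝ) ≤ α * S) ∧
      Real.logb 2 (Nat.choose T S : ℝ)
          - Real.logb 2 (Nat.choose T (⌈(1 - α) * (S : ℝ)⌉₊ - 1) : ℝ) - (S : ℝ)
        ≤ Real.logb 2 (G.card : ℝ) := by
  classical
  have hST : S ≤ T := le_trans (by omega) hS2
  have hSpos : (0:ℝ) < (S:ℝ) := by exact_mod_cast hS1
  set M : ℕ := ⌈(1 - α) * (S : ℝ)⌉₊ with hMdef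
  have hM1 : 1 ≤ M := Nat.one_le_iff_ne_zero.2 (by
    have : (0:ℝ) < (1 - α) * S := by nlinarith
    have := Nat.ceil_pos.2 this
    omega)
  have hMS : M ≤ S := Nat.ceil_le.2 (by nlinarith)
  have hMle : (1 - α) * (S:ℝ) ≤ (M:ℝ) := Nat.le_ceil _
  set k : ℕ := S + 1 - M with hkdef
  have hk1 : 1 ≤ k := by omega
  have hkS : k ≤ S := by omega
  have hSk : S - k = M - 1 := by omega
  have hkreal : (k:ℝ) = (S:ℝ) + 1 - M := by
    have : (k:ℕ) + M = S + 1 := by omega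
    have := congrArg (Nat.cast (R := ℝ)) this
    push_cast at this
    linarith
  -- maximal good family
  set 𝒮 : Finset (Finset (Finset (Fin T))) :=
    (Finset.univ.powersetCard S).powerset.filter
      (fun A => ∀ s ∈ A, ∀ t ∈ A, s ≠ t → (((s ∩ t).card : ℝ)) ≤ α * S) with h𝒮
  have h𝒮ne : 𝒮.Nonempty := ⟨∅, by simp [h𝒮]⟩
  obtain ⟨G', hG'mem, hG'max⟩ := Finset.exists_max_image 𝒮 Finset.card h𝒮ne
  rw [h𝒮, Finset.mem_filter, Finset.mem_powerset] at hG'mem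
  obtain ⟨hG'sub, hG'good⟩ := hG'mem
  -- covering property from maximality
  have hcov : ∀ s ∈ Finset.univ.powersetCard S, ∃ t ∈ G', α * S < ((s ∩ t).card : ℝ) := by
    intro s hs
    by_cases hsG : s ∈ G'
    · refine ⟨s, hsG, ?_⟩
      have hcard : s.card = S := (Finset.mem_powersetCard.1 hs).2
      rw [Finset.inter_self, hcard]
      nlinarith
    · by_contra hcon
      push_neg at hcon
      have hins : insert s G' ∈ 𝒮 := by
        rw [h𝒮, Finset.mem_filter, Finset.mem_powerset]
        constructor
        · exact Finset.insert_subset hs hG'sub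
        · intro a ha b hb hab
          rcases Finset.mem_insert.1 ha with ha' | ha'
          · rcases Finset.mem_insert.1 hb with hb' | hb'
            · exact absurd (ha'.trans hb'.symm) hab
            · rw [ha']; exact hcon b hb'
          · rcases Finset.mem_insert.1 hb with hb' | hb'
            · rw [hb', Finset.inter_comm]; exact hcon a ha'
            · exact hG'good a ha' b hb' hab
      have := hG'max _ hins
      rw [Finset.card_insert_of_notMem hsG] at this
      omega
  -- G' is nonempty
  have hchoosepos : 0 < T.choose S := Nat.choose_pos hST
  have hpcard : (Finset.univ.powersetCard S : Finset (Finset (Fin T))).card = T.choose S := by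
    simp [Finset.card_powersetCard]
  have hG'ne : 1 ≤ G'.card := by
    have hne : (Finset.univ.powersetCard S : Finset (Finset (Fin T))).Nonempty := by
      rw [← Finset.card_pos, hpcard]; exact hchoosepos
    obtain ⟨s0, hs0⟩ := hne
    obtain ⟨t, ht, -⟩ := hcov s0 hs0
    exact Finset.card_pos.2 ⟨t, ht⟩
  -- counting
  have hbiUnion : Finset.univ.powersetCard S ⊆ G'.biUnion
      (fun t => (Finset.univ.powersetCard S).filter (fun s => k ≤ (s ∩ t).card)) := by
    intro s hs
    obtain ⟨t, ht, hlt⟩ := hcov s hs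
    refine Finset.mem_biUnion.2 ⟨t, ht, Finset.mem_filter.2 ⟨hs, ?_⟩⟩
    have h1 : (k:ℝ) - 1 ≤ α * S := by rw [hkreal]; linarith
    have h2 : (k:ℝ) < ((s ∩ t).card : ℝ) + 1 := by linarith
    have h3 : k < (s ∩ t).card + 1 := by exact_mod_cast h2
    omega
  have hchoose2 : S.choose k ≤ 2 ^ S := by
    calc S.choose k ≤ ∑ i ∈ Finset.range (S + 1), S.choose i :=
          Finset.single_le_sum (fun i _ => Nat.zero_le _) (Finset.mem_range.2 (by omega))
      _ = 2 ^ S := Nat.sum_range_choose S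
  have hkey : T.choose S ≤ G'.card * (2 ^ S * T.choose (M - 1)) := by
    calc T.choose S = (Finset.univ.powersetCard S : Finset (Finset (Fin T))).card :=
          hpcard.symm
      _ ≤ (G'.biUnion (fun t => (Finset.univ.powersetCard S).filter
            (fun s => k ≤ (s ∩ t).card))).card := Finset.card_le_card hbiUnion
      _ ≤ ∑ t ∈ G', ((Finset.univ.powersetCard S).filter (fun s => k ≤ (s ∩ t).card)).card :=
          Finset.card_biUnion_le
      _ ≤ ∑ _t ∈ G', 2 ^ S * T.choose (M - 1) := by
          refine Finset.sum_le_sum fun t ht => ?_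
          have htc : t.card = S := (Finset.mem_powersetCard.1 (hG'sub ht)).2
          calc _ ≤ S.choose k * T.choose (S - k) := count_overlap S k t htc
            _ ≤ 2 ^ S * T.choose (M - 1) := by
                rw [hSk]; exact Nat.mul_le_mul_right _ hchoose2
      _ = G'.card * (2 ^ S * T.choose (M - 1)) := by
          rw [Finset.sum_const, smul_eq_mul]
  -- build G
  set ind : Finset (Fin T) → ((Fin T) → Bool) := fun s => fun i => decide (i ∈ s) with hind
  have hindinj : Set.InjOn ind (G' : Set (Finset (Fin T))) := by
    intro a _ b _ hab
    ext i
    have := congrFun hab i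
    simpa [hind] using this
  refine ⟨G'.image ind, ?_, ?_, ?_⟩
  · intro a ha
    obtain ⟨s, hs, rfl⟩ := Finset.mem_image.1 ha
    have hcard : s.card = S := (Finset.mem_powersetCard.1 (hG'sub hs)).2
    have : (Finset.univ.filter fun t => ind s t = true) = s := by
      ext i; simp [hind]
    rw [this, hcard]
  · intro a ha b hb hab
    obtain ⟨s, hs, rfl⟩ := Finset.mem_image.1 ha
    obtain ⟨t, ht, rfl⟩ := Finset.mem_image.1 hb
    have hst : s ≠ t := fun h => hab (by rw [h])
    have : (Finset.univ.filter fun i => ind s i = true ∧ ind t i = true) = s ∩ t := by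
      ext i; simp [hind, Finset.mem_inter]
    rw [this]
    exact hG'good s hs t ht hst
  · rw [Finset.card_image_of_injOn hindinj]
    have hN2pos : 0 < T.choose (M - 1) := Nat.choose_pos (by omega)
    have hreal : (T.choose S : ℝ) ≤ (G'.card : ℝ) * (2 ^ S * (T.choose (M - 1) : ℝ)) := by
      exact_mod_cast hkey
    have hgpos : (0:ℝ) < (G'.card : ℝ) := by exact_mod_cast hG'ne
    have hN2posR : (0:ℝ) < (T.choose (M - 1) : ℝ) := by exact_mod_cast hN2pos
    have hlog : Real.logb 2 (T.choose S : ℝ)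
        ≤ Real.logb 2 ((G'.card : ℝ) * (2 ^ S * (T.choose (M - 1) : ℝ))) :=
      Real.logb_le_logb_of_le (by norm_num) (by exact_mod_cast hchoosepos) hreal
    have hexp : Real.logb 2 ((G'.card : ℝ) * (2 ^ S * (T.choose (M - 1) : ℝ)))
        = Real.logb 2 (G'.card : ℝ) + ((S:ℝ) + Real.logb 2 (T.choose (M - 1) : ℝ)) := by
      rw [Real.logb_mul (ne_of_gt hgpos) (by positivity),
        Real.logb_mul (by positivity) (ne_of_gt hN2posR)]
      congr 2
      rw [Real.logb_pow]
      simp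
    rw [hexp] at hlog
    linarith
end

section
/- Fix finite alphabets 𝒳, 𝒴, a blocklength n, and a channel W. Let m ≥ 1 be an integer, S an integer with 1 ≤ S ≤ 2^{m−1}, and α ∈ (0, 1). If there exists an (n, m, ℱ_m^W(S), λ1, λ2) BFC code for W, then there exists an (n, N, λ1, α + λ2) ID code for W with log₂ N ≥ log₂ C(2^m, S) − log₂ C(2^m, ⌈(1−α)S⌉ − 1) − S, where C(a,b) denotes the binomial coefficient. -/
open Finset

private lemma my_choose_le_two_pow (n k : ℕ) : n.choose k ≤ 2 ^ n := by
  rcases le_or_gt k n with h | h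
  · calc n.choose k ≤ ∑ i ∈ Finset.range (n+1), n.choose i :=
        Finset.single_le_sum (fun i _ => Nat.zero_le _) (Finset.mem_range.mpr (by omega))
      _ = 2 ^ n := Nat.sum_range_choose n
  · simp [Nat.choose_eq_zero_of_lt h]

private lemma my_count_close {I : Type*} [Fintype I] [DecidableEq I] (S t : ℕ) (A : Finset I)
    (hA : A.card = S) (ht : t + 1 ≤ S) :
    ((Finset.univ.powersetCard S).filter (fun B => t + 1 ≤ (A ∩ B).card)).card
      ≤ 2 ^ S * Nat.choose (Fintype.card I) (S - t - 1) := by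
  classical
  have hsub : ((Finset.univ.powersetCard S).filter (fun B => t + 1 ≤ (A ∩ B).card))
      ⊆ (A.powersetCard (t+1)).biUnion
        (fun J => (Finset.univ.powersetCard S).filter (fun B => J ⊆ B)) := by
    intro B hB
    rw [Finset.mem_filter] at hB
    obtain ⟨hB1, hcard⟩ := hB
    obtain ⟨J, hJsub, hJcard⟩ := Finset.exists_subset_card_eq hcard
    refine Finset.mem_biUnion.mpr ⟨J, ?_, ?_⟩
    · exact Finset.mem_powersetCard.mpr ⟨hJsub.trans Finset.inter_subset_left, hJcard⟩
    · exact Finset.mem_filter.mpr ⟨hB1, hJsub.trans Finset.inter_subset_right⟩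
  have hJbound : ∀ J ∈ A.powersetCard (t+1),
      ((Finset.univ.powersetCard S).filter (fun B => J ⊆ B)).card
        ≤ Nat.choose (Fintype.card I) (S - t - 1) := by
    intro J hJ
    have hJcard : J.card = t + 1 := (Finset.mem_powersetCard.mp hJ).2
    have hinj : ((Finset.univ.powersetCard S).filter (fun B => J ⊆ B)).card
        ≤ (Finset.univ.powersetCard (S - t - 1) : Finset (Finset I)).card := by
      apply Finset.card_le_card_of_injOn (fun B => B \ J)
      · intro B hB
        rw [Finset.mem_coe, Finset.mem_filter] at hB
        have hBS : B.card = S := (Finset.mem_powersetCard.mp hB.1).2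
        refine Finset.mem_powersetCard.mpr ⟨Finset.subset_univ _, ?_⟩
        rw [Finset.card_sdiff_of_subset hB.2, hBS, hJcard]; omega
      · intro B1 h1 B2 h2 h
        simp only [Finset.coe_filter, Set.mem_setOf_eq] at h1 h2
        have he : B1 \ J ∪ J = B2 \ J ∪ J := by simp only at h; rw [h]
        rwa [Finset.sdiff_union_of_subset h1.2, Finset.sdiff_union_of_subset h2.2] at he
    simpa [Finset.card_powersetCard] using hinj
  calc ((Finset.univ.powersetCard S).filter (fun B => t + 1 ≤ (A ∩ B).card)).card
      ≤ ((A.powersetCard (t+1)).biUnion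
        (fun J => (Finset.univ.powersetCard S).filter (fun B => J ⊆ B))).card :=
        Finset.card_le_card hsub
    _ ≤ ∑ J ∈ A.powersetCard (t+1),
        ((Finset.univ.powersetCard S).filter (fun B => J ⊆ B)).card :=
        Finset.card_biUnion_le
    _ ≤ (A.powersetCard (t+1)).card * Nat.choose (Fintype.card I) (S - t - 1) := by
        simpa using Finset.sum_le_card_nsmul _ _ _ hJbound
    _ ≤ 2 ^ S * Nat.choose (Fintype.card I) (S - t - 1) := by
        apply Nat.mul_le_mul_right
        rw [Finset.card_powersetCard, hA]
        exact my_choose_le_two_pow S (t+1)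

private lemma my_exists_good_family {I : Type*} [Fintype I] [DecidableEq I] (S t : ℕ)
    (htS : t < S) (hSM : S ≤ Fintype.card I) :
    ∃ 𝒜 : Finset (Finset I), 𝒜.Nonempty ∧ (∀ A ∈ 𝒜, A.card = S) ∧
      (∀ A ∈ 𝒜, ∀ B ∈ 𝒜, A ≠ B → (A ∩ B).card ≤ t) ∧
      Nat.choose (Fintype.card I) S ≤ 𝒜.card * (2 ^ S * Nat.choose (Fintype.card I) (S - t - 1)) := by
  classical
  set P : Finset (Finset I) → Prop := fun 𝒜 =>
    (∀ A ∈ 𝒜, A.card = S) ∧ (∀ A ∈ 𝒜, ∀ B ∈ 𝒜, A ≠ B → (A ∩ B).card ≤ t) with hP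
  have hPempty : P ∅ := ⟨fun A h => absurd h (Finset.notMem_empty A), fun A h => absurd h (Finset.notMem_empty A)⟩
  have hne : (Finset.univ.filter P).Nonempty := ⟨∅, Finset.mem_filter.mpr ⟨Finset.mem_univ _, hPempty⟩⟩
  obtain ⟨𝒜, h𝒜mem, hmax⟩ : ∃ m ∈ Finset.univ.filter P, ∀ x ∈ Finset.univ.filter P, ¬ m < x := by
    obtain ⟨i, hi⟩ := Finset.exists_maximal hne
    exact ⟨i, hi.1, fun x hx hlt => absurd (hi.2 hx hlt.le) (not_le_of_gt hlt)⟩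
  have h𝒜P : P 𝒜 := (Finset.mem_filter.mp h𝒜mem).2
  -- covering property
  have hcover : ∀ B : Finset I, B.card = S → ∃ A ∈ 𝒜, t + 1 ≤ (A ∩ B).card := by
    intro B hB
    by_contra hcon
    push_neg at hcon
    have hBnot : B ∉ 𝒜 := by
      intro hmem
      have := hcon B hmem
      rw [Finset.inter_self, hB] at this
      omega
    have hPins : P (insert B 𝒜) := by
      constructor
      · intro A hA
        rcases Finset.mem_insert.mp hA with h | h
        · rw [h]; exact hB
        · exact h𝒜P.1 A h
      · intro A hA A' hA' hne'
        rcases Finset.mem_insert.mp hA with h | h <;> rcases Finset.mem_insert.mp hA' with h' | h'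
        · exact absurd (h.trans h'.symm) hne'
        · subst h
          have := hcon A' h'
          rw [Finset.inter_comm]
          omega
        · subst h'
          have := hcon A h
          omega
        · exact h𝒜P.2 A h A' h' hne'
    exact hmax _ (Finset.mem_filter.mpr ⟨Finset.mem_univ _, hPins⟩) (Finset.ssubset_insert hBnot)
  -- counting
  have hcount : (Finset.univ.powersetCard S : Finset (Finset I))
      ⊆ 𝒜.biUnion (fun A => (Finset.univ.powersetCard S).filter (fun B => t + 1 ≤ (A ∩ B).card)) := by
    intro B hB
    have hBS : B.card = S := (Finset.mem_powersetCard.mp hB).2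
    obtain ⟨A, hA, hAB⟩ := hcover B hBS
    exact Finset.mem_biUnion.mpr ⟨A, hA, Finset.mem_filter.mpr ⟨hB, hAB⟩⟩
  have hchoose : Nat.choose (Fintype.card I) S
      ≤ 𝒜.card * (2 ^ S * Nat.choose (Fintype.card I) (S - t - 1)) := by
    calc Nat.choose (Fintype.card I) S
        = (Finset.univ.powersetCard S : Finset (Finset I)).card := by
          rw [Finset.card_powersetCard, Finset.card_univ]
      _ ≤ (𝒜.biUnion (fun A => (Finset.univ.powersetCard S).filter
            (fun B => t + 1 ≤ (A ∩ B).card))).card := Finset.card_le_card hcount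
      _ ≤ ∑ A ∈ 𝒜, ((Finset.univ.powersetCard S).filter (fun B => t + 1 ≤ (A ∩ B).card)).card :=
          Finset.card_biUnion_le
      _ ≤ 𝒜.card * (2 ^ S * Nat.choose (Fintype.card I) (S - t - 1)) := by
          simpa using Finset.sum_le_card_nsmul _ _ _
            (fun A hA => my_count_close S t A (h𝒜P.1 A hA) (by omega))
  have h𝒜ne : 𝒜.Nonempty := by
    obtain ⟨A0, hA0sub, hA0card⟩ := Finset.exists_subset_card_eq (s := (Finset.univ : Finset I)) (by simpa using hSM)
    obtain ⟨A, hA, _⟩ := hcover A0 hA0card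
    exact ⟨A, hA⟩
  exact ⟨𝒜, h𝒜ne, h𝒜P.1, h𝒜P.2, hchoose⟩

private lemma my_outProb_nonneg {α β : Type*} [Fintype α] [Fintype β]
    {W : α → β → ℝ} (hW : IsChannel W) {Qi : α → ℝ} (hQ : ∀ x, 0 ≤ Qi x)
    (D : Finset β) : 0 ≤ outProb W Qi D := by
  apply Finset.sum_nonneg
  intro x _
  exact mul_nonneg (hQ x) (Finset.sum_nonneg fun y _ => (hW x).1 y)

private lemma my_outProb_le_one {α β : Type*} [Fintype α] [Fintype β]
    {W : α → β → ℝ} (hW : IsChannel W) {Qi : α → ℝ} (hQ : IsPMF Qi)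
    (D : Finset β) : outProb W Qi D ≤ 1 := by
  calc outProb W Qi D ≤ ∑ x, Qi x * 1 := by
        apply Finset.sum_le_sum
        intro x _
        apply mul_le_mul_of_nonneg_left _ (hQ.1 x)
        calc ∑ y ∈ D, W x y ≤ ∑ y, W x y :=
              Finset.sum_le_sum_of_subset_of_nonneg (Finset.subset_univ D)
                (fun y _ _ => (hW x).1 y)
          _ = 1 := (hW x).2
    _ = 1 := by simp [hQ.2]

private lemma my_outProb_avg {α β : Type*} [Fintype α] [Fintype β] {ι : Type*}
    (W : α → β → ℝ) (Q : ι → α → ℝ) (B : Finset ι) (S : ℝ) (D : Finset β) :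
    outProb W (fun x => (∑ i ∈ B, Q i x) / S) D = (∑ i ∈ B, outProb W (Q i) D) / S := by
  simp only [outProb, Finset.sum_div, div_mul_eq_mul_div, Finset.sum_mul]
  rw [Finset.sum_comm]

private lemma my_ceil_eq {S t : ℕ} {α : ℝ} (hS : 1 ≤ S) (hα0 : 0 < α) (hα1 : α < 1)
    (ht : t = ⌊α * (S : ℝ)⌋₊) : ⌈(1 - α) * (S : ℝ)⌉₊ = S - t := by
  have hSpos : (0:ℝ) < S := by exact_mod_cast hS
  have h1 : (t:ℝ) ≤ α * S := ht ▸ Nat.floor_le (by positivity)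
  have h2 : α * S < t + 1 := ht ▸ Nat.lt_floor_add_one _
  have htS : t < S := by
    have : (t:ℝ) < S := lt_of_le_of_lt h1 (by nlinarith)
    exact_mod_cast this
  rw [Nat.ceil_eq_iff (by omega : S - t ≠ 0)]
  constructor
  · push_cast [Nat.cast_sub htS.le, Nat.cast_sub (by omega : 1 ≤ S - t)]
    nlinarith
  · push_cast [Nat.cast_sub htS.le]
    nlinarith

/-- any `(n, m, ℱ_m^W(S), λ1, λ2)` BFC code yields an
`(n, N, λ1, α + λ2)` ID code with
`log₂ N ≥ log₂ C(2^m, S) − log₂ C(2^m, ⌈(1−α)S⌉ − 1) − S`. -/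
theorem bfc_code_implies_id_code {𝒳 𝒴 : Type*}
    [Fintype 𝒳] [DecidableEq 𝒳] [Fintype 𝒴] [DecidableEq 𝒴] {n : ℕ}
    (W : (Fin n → 𝒳) → (Fin n → 𝒴) → ℝ) (hW : IsChannel W)
    (m S : ℕ) (hm : 1 ≤ m) (hS1 : 1 ≤ S) (hS2 : S ≤ 2 ^ (m - 1))
    (α : ℝ) (hα0 : 0 < α) (hα1 : α < 1)
    (lam1 lam2 : ℝ)
    (Q : (Fin m → Bool) → (Fin n → 𝒳) → ℝ)
    (D : ((Fin m → Bool) → Bool) → Finset (Fin n → 𝒴))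
    (hcode : IsBFCCode W (FeqNat m S) Q D lam1 lam2) :
    ∃ (N : ℕ) (Qt : Fin N → (Fin n → 𝒳) → ℝ) (Dt : Fin N → Finset (Fin n → 𝒴)),
      IsIDCode W Qt Dt lam1 (α + lam2) ∧
      Real.logb 2 (Nat.choose (2 ^ m) S : ℝ)
          - Real.logb 2 (Nat.choose (2 ^ m) (⌈(1 - α) * (S : ℝ)⌉₊ - 1) : ℝ) - (S : ℝ)
        ≤ Real.logb 2 (N : ℝ) := by
  classical
  have hSpos : (0:ℝ) < S := by exact_mod_cast hS1
  have hM : Fintype.card (Fin m → Bool) = 2 ^ m := by simp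
  have hSM : S < 2 ^ m := by
    calc S ≤ 2 ^ (m-1) := hS2
      _ < 2 ^ m := Nat.pow_lt_pow_right (by norm_num) (by omega)
  -- the weight function
  have hw : ∀ B : Finset (Fin m → Bool),
      hammingWeight (fun i => decide (i ∈ B)) = B.card := by
    intro B
    unfold hammingWeight
    congr 1
    ext i
    simp
  have hfmem : ∀ B : Finset (Fin m → Bool), B.card = S →
      (fun i => decide (i ∈ B)) ∈ FeqNat m S := by
    intro B hB
    simp only [FeqNat, Set.mem_setOf_eq, hw, hB]
  obtain ⟨hQpmf, herr⟩ := hcode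
  -- lam2 is nonnegative
  have hlam2 : 0 ≤ lam2 := by
    obtain ⟨A0, hA0sub, hA0card⟩ := Finset.exists_subset_card_eq
      (show S ≤ (Finset.univ : Finset (Fin m → Bool)).card by rw [Finset.card_univ, hM]; omega)
    have hA0ne : A0 ≠ Finset.univ := by
      intro h
      rw [h, Finset.card_univ, hM] at hA0card
      omega
    obtain ⟨i, hi⟩ : ∃ i, i ∉ A0 := by
      by_contra hcon
      push_neg at hcon
      exact hA0ne (Finset.eq_univ_iff_forall.mpr hcon)
    have := (herr i _ (hfmem A0 hA0card)).2 (by simp [hi])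
    exact le_trans (my_outProb_nonneg hW (hQpmf i).1 _) this
  set t := ⌊α * (S : ℝ)⌋₊ with ht_def
  have h1 : (t:ℝ) ≤ α * S := Nat.floor_le (by positivity)
  have h2 : α * (S:ℝ) < t + 1 := Nat.lt_floor_add_one _
  have htS : t < S := by
    have : (t:ℝ) < S := lt_of_le_of_lt h1 (by nlinarith)
    exact_mod_cast this
  obtain ⟨𝒜, h𝒜ne, h𝒜card, h𝒜int, h𝒜count⟩ :=
    my_exists_good_family (I := Fin m → Bool) S t htS (by rw [hM]; omega)
  set N := 𝒜.card with hN_def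
  have hNpos : 0 < N := Finset.card_pos.mpr h𝒜ne
  set Aj : Fin N → Finset (Fin m → Bool) := fun j => (𝒜.equivFin.symm j : Finset (Fin m → Bool))
    with hAj_def
  have hAjmem : ∀ j, Aj j ∈ 𝒜 := fun j => (𝒜.equivFin.symm j).2
  have hAjcard : ∀ j, (Aj j).card = S := fun j => h𝒜card _ (hAjmem j)
  have hAjinj : Function.Injective Aj := fun j l h =>
    𝒜.equivFin.symm.injective (Subtype.ext h)
  refine ⟨N, fun j x => (∑ i ∈ Aj j, Q i x) / S,
    fun j => D (fun i => decide (i ∈ Aj j)), ⟨?_, ?_, ?_⟩, ?_⟩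
  · -- PMF
    intro j
    constructor
    · intro x
      apply div_nonneg _ hSpos.le
      exact Finset.sum_nonneg fun i _ => (hQpmf i).1 x
    · rw [← Finset.sum_div, Finset.sum_comm]
      have : ∀ i ∈ Aj j, ∑ x, Q i x = 1 := fun i _ => (hQpmf i).2
      rw [Finset.sum_congr rfl this, Finset.sum_const, hAjcard j]
      simp [hSpos.ne']
  · -- missed detection
    intro j
    rw [my_outProb_avg]
    rw [div_le_iff₀ hSpos]
    calc ∑ i ∈ Aj j, outProb W (Q i) (D (fun i => decide (i ∈ Aj j)))ᶜ
        ≤ (Aj j).card • lam1 := by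
          apply Finset.sum_le_card_nsmul
          intro i hi
          exact (herr i _ (hfmem _ (hAjcard j))).1 (by simp [hi])
      _ = lam1 * S := by rw [hAjcard j]; rw [nsmul_eq_mul]; ring
  · -- false alarm
    intro l j hlj
    rw [my_outProb_avg]
    rw [div_le_iff₀ hSpos]
    have hint : ((Aj l) ∩ (Aj j)).card ≤ t :=
      h𝒜int _ (hAjmem l) _ (hAjmem j) (fun h => hlj (hAjinj h))
    have hsplit : ∑ i ∈ (Aj l) ∩ (Aj j), outProb W (Q i) (D (fun i => decide (i ∈ Aj j)))
        + ∑ i ∈ (Aj l) \ (Aj j), outProb W (Q i) (D (fun i => decide (i ∈ Aj j)))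
        = ∑ i ∈ Aj l, outProb W (Q i) (D (fun i => decide (i ∈ Aj j))) :=
      Finset.sum_inter_add_sum_sdiff _ _ _
    have hb1 : ∑ i ∈ (Aj l) ∩ (Aj j), outProb W (Q i) (D (fun i => decide (i ∈ Aj j)))
        ≤ (t : ℝ) := by
      calc ∑ i ∈ (Aj l) ∩ (Aj j), outProb W (Q i) (D (fun i => decide (i ∈ Aj j)))
          ≤ ((Aj l) ∩ (Aj j)).card • (1:ℝ) :=
            Finset.sum_le_card_nsmul _ _ _ (fun i _ => my_outProb_le_one hW (hQpmf i) _)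
        _ = ((Aj l) ∩ (Aj j)).card := by simp
        _ ≤ (t : ℝ) := by exact_mod_cast hint
    have hb2 : ∑ i ∈ (Aj l) \ (Aj j), outProb W (Q i) (D (fun i => decide (i ∈ Aj j)))
        ≤ (S : ℝ) * lam2 := by
      calc ∑ i ∈ (Aj l) \ (Aj j), outProb W (Q i) (D (fun i => decide (i ∈ Aj j)))
          ≤ ((Aj l) \ (Aj j)).card • lam2 := by
            apply Finset.sum_le_card_nsmul
            intro i hi
            rw [Finset.mem_sdiff] at hi
            exact (herr i _ (hfmem _ (hAjcard j))).2 (by simp [hi.2])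
        _ = (((Aj l) \ (Aj j)).card : ℝ) * lam2 := nsmul_eq_mul _ _
        _ ≤ (S : ℝ) * lam2 := by
            apply mul_le_mul_of_nonneg_right _ hlam2
            have : ((Aj l) \ (Aj j)).card ≤ S := by
              rw [← hAjcard l]
              exact Finset.card_le_card (Finset.sdiff_subset)
            exact_mod_cast this
    nlinarith [h1]
  · -- the log bound
    have hceil : ⌈(1 - α) * (S : ℝ)⌉₊ - 1 = S - t - 1 := by
      rw [my_ceil_eq hS1 hα0 hα1 ht_def]
    rw [hceil]
    have hkey : ((2^m).choose S : ℝ) ≤ (N:ℝ) * ((2:ℝ)^S * ((2^m).choose (S - t - 1) : ℝ)) := by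
      rw [hM] at h𝒜count
      exact_mod_cast h𝒜count
    have hc1 : (0:ℝ) < ((2^m).choose S : ℝ) := by
      exact_mod_cast Nat.choose_pos (le_of_lt hSM)
    have hc2 : (0:ℝ) < ((2^m).choose (S - t - 1) : ℝ) := by
      exact_mod_cast Nat.choose_pos (by omega : S - t - 1 ≤ 2^m)
    have hNpos' : (0:ℝ) < (N:ℝ) := by exact_mod_cast hNpos
    have hlog : Real.logb 2 ((2^m).choose S : ℝ)
        ≤ Real.logb 2 ((N:ℝ) * ((2:ℝ)^S * ((2^m).choose (S - t - 1) : ℝ))) :=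
      Real.logb_le_logb_of_le (by norm_num) hc1 hkey
    rw [Real.logb_mul hNpos'.ne' (by positivity), Real.logb_mul (by positivity) hc2.ne',
      Real.logb_pow, Real.logb_self_eq_one (by norm_num)] at hlog
    linarith
end

section
/- For every integer m ≥ 1, every integer S with 1 ≤ S ≤ 2^m, and every α ∈ (0, 1), the following inequality holds: log₂ C(2^m, S) − log₂ C(2^m, ⌈(1−α)S⌉ − 1) − S ≥ S·(α·m − log₂ S − 1), where C(a,b) denotes the binomial coefficient a choose b (with C(a, b) := 1 when b ≤ 0). -/
open Finset

lemma pow_le_pow_mul_choose (n S : ℕ) (h : S ≤ n) : n ^ S ≤ S ^ S * n.choose S := by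
  have key : n ^ S * S.factorial ≤ S ^ S * n.descFactorial S := by
    rw [← Nat.descFactorial_self, Nat.descFactorial_eq_prod_range,
      Nat.descFactorial_eq_prod_range]
    calc n ^ S * ∏ i ∈ Finset.range S, (S - i)
        = ∏ i ∈ Finset.range S, n * (S - i) := by
          rw [Finset.prod_mul_distrib, Finset.prod_const, Finset.card_range]
      _ ≤ ∏ i ∈ Finset.range S, S * (n - i) := by
          apply Finset.prod_le_prod'
          intro i hi
          have h1 : i ≤ S := le_of_lt (Finset.mem_range.mp hi)
          have h2 : i ≤ n := h1.trans h
          zify [h1, h2]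
          nlinarith [(show (0:ℤ) ≤ (i:ℤ) from Int.natCast_nonneg i),
            (show (S:ℤ) ≤ (n:ℤ) from by exact_mod_cast h)]
      _ = S ^ S * ∏ i ∈ Finset.range S, (n - i) := by
          rw [Finset.prod_mul_distrib, Finset.prod_const, Finset.card_range]
  rw [Nat.descFactorial_eq_factorial_mul_choose] at key
  have hmul : n ^ S * S.factorial ≤ (S ^ S * n.choose S) * S.factorial := by
    calc n ^ S * S.factorial ≤ S ^ S * (S.factorial * n.choose S) := key
      _ = S ^ S * n.choose S * S.factorial := by ring
  exact Nat.le_of_mul_le_mul_right hmul S.factorial_pos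

/-- `log₂ C(2^m, S) − log₂ C(2^m, ⌈(1−α)S⌉ − 1) − S ≥ S(αm − log₂ S − 1)`. -/
theorem choose_logb_lower_bound (m S : ℕ) (hm : 1 ≤ m) (hS1 : 1 ≤ S) (hS2 : S ≤ 2 ^ m)
    (α : ℝ) (hα0 : 0 < α) (hα1 : α < 1) :
    (S : ℝ) * (α * (m : ℝ) - Real.logb 2 (S : ℝ) - 1)
      ≤ Real.logb 2 (Nat.choose (2 ^ m) S : ℝ)
          - Real.logb 2 (Nat.choose (2 ^ m) (⌈(1 - α) * (S : ℝ)⌉₊ - 1) : ℝ)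
          - (S : ℝ) := by
  set t : ℕ := ⌈(1 - α) * (S : ℝ)⌉₊ - 1 with ht
  have htS : t ≤ S := by
    have : ⌈(1 - α) * (S : ℝ)⌉₊ ≤ S := by
      apply Nat.ceil_le.mpr
      nlinarith [(show (1:ℝ) ≤ (S:ℝ) from by exact_mod_cast hS1)]
    omega
  have htR : (t : ℝ) ≤ (1 - α) * (S : ℝ) := by
    have hx0 : (0:ℝ) ≤ (1 - α) * (S : ℝ) := by
      have : (0:ℝ) ≤ (S:ℝ) := Nat.cast_nonneg S
      nlinarith
    rcases Nat.eq_zero_or_pos ⌈(1 - α) * (S : ℝ)⌉₊ with h0 | hpos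
    · simp [ht, h0, hx0]
    · have : (t : ℝ) = (⌈(1 - α) * (S : ℝ)⌉₊ : ℝ) - 1 := by
        rw [ht]; push_cast [hpos]; ring
      rw [this]
      have := Nat.ceil_lt_add_one hx0
      linarith
  have hS1R : (1:ℝ) ≤ (S:ℝ) := by exact_mod_cast hS1
  have hCpos : 0 < (2 ^ m).choose S := Nat.choose_pos hS2
  have hCtpos : 0 < (2 ^ m).choose t := Nat.choose_pos (htS.trans hS2)
  -- lower bound on logb of choose S
  have h1 : (S : ℝ) * m - (S:ℝ) * Real.logb 2 (S:ℝ)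
      ≤ Real.logb 2 (Nat.choose (2 ^ m) S : ℝ) := by
    have key : ((2:ℝ) ^ m) ^ S ≤ (S:ℝ) ^ S * ((2 ^ m).choose S : ℝ) := by
      exact_mod_cast Nat.cast_le.mpr (pow_le_pow_mul_choose (2 ^ m) S hS2)
    have hl := (Real.logb_le_logb (by norm_num : (1:ℝ) < 2) (by positivity)
        (mul_pos (by positivity) (by exact_mod_cast hCpos))).mpr key
    rw [Real.logb_pow, Real.logb_pow, Real.logb_mul (by positivity) (by positivity),
      Real.logb_pow, Real.logb_self_eq_one (by norm_num)] at hl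
    linarith
  -- upper bound on logb of choose t
  have h2 : Real.logb 2 (Nat.choose (2 ^ m) t : ℝ) ≤ (1 - α) * (S:ℝ) * m := by
    have key : ((2 ^ m).choose t : ℝ) ≤ ((2:ℝ) ^ m) ^ t := by
      exact_mod_cast Nat.cast_le.mpr (Nat.choose_le_pow (2 ^ m) t)
    have hl := (Real.logb_le_logb (by norm_num : (1:ℝ) < 2) (by exact_mod_cast hCtpos)
        (by positivity : (0:ℝ) < ((2:ℝ) ^ m) ^ t)).mpr key
    rw [Real.logb_pow, Real.logb_pow, Real.logb_self_eq_one (by norm_num)] at hl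
    have hm0 : (0:ℝ) ≤ (m:ℝ) := Nat.cast_nonneg m
    nlinarith [mul_le_mul_of_nonneg_right htR hm0]
  push_cast at h1 h2 ⊢
  nlinarith [h1, h2]
end

section
/- Fix finite alphabets 𝒳, 𝒴 and a family of channels (W_n)_{n ∈ ℕ}. Assume the identification converse holds at rate C > 0: for all μ1, μ2 > 0 with μ1 + μ2 < 1 and all δ > 0, for every sufficiently large n, every (n, N, μ1, μ2) ID code for W_n satisfies log₂ N ≤ 2^{n(C+δ)}. Let c be a fixed positive integer, and let λ1, λ2 > 0 with λ1 + λ2 < 1. Then for every δ' > 0 there exist m₀, n₀ such that for all m ≥ m₀ and n ≥ n₀: if an (n, m, ℱ_m^W(c), λ1, λ2) BFC code for W_n exists, then m ≤ 2^{n(C+δ')}. (Converse, Case 1: for constant Hamming weight S = c, the message length m can grow at most exponentially in n with exponent C.) -/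
open Finset

lemma build_id {𝒳 𝒴 : Type*} [Fintype 𝒳] [Fintype 𝒴] [DecidableEq 𝒴]
    {n m c : ℕ} (hc : 0 < c)
    (W : (Fin n → 𝒳) → (Fin n → 𝒴) → ℝ)
    (Q : (Fin m → Bool) → (Fin n → 𝒳) → ℝ)
    (D : ((Fin m → Bool) → Bool) → Finset (Fin n → 𝒴))
    (lam1 lam2 : ℝ)
    (h : IsBFCCode W (FeqNat m c) Q D lam1 lam2) :
    ∃ (Qt : Fin (2^m / c) → (Fin n → 𝒳) → ℝ)
      (Dt : Fin (2^m / c) → Finset (Fin n → 𝒴)),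
      IsIDCode W Qt Dt lam1 lam2 := by
  have hcard : Fintype.card (Fin m → Bool) = 2 ^ m := by simp
  let e : (Fin m → Bool) ≃ Fin (2 ^ m) := Fintype.equivFinOfCardEq hcard
  have hlt : ∀ j : Fin (2 ^ m / c), (j : ℕ) * c + c ≤ 2 ^ m := by
    intro j
    have hj : (j : ℕ) + 1 ≤ 2 ^ m / c := j.isLt
    calc (j : ℕ) * c + c = ((j : ℕ) + 1) * c := by ring
      _ ≤ (2 ^ m / c) * c := Nat.mul_le_mul_right c hj
      _ ≤ 2 ^ m := Nat.div_mul_le_self _ _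
  let f : Fin (2 ^ m / c) → (Fin m → Bool) → Bool :=
    fun j x => decide ((j : ℕ) * c ≤ (e x : ℕ) ∧ (e x : ℕ) < (j : ℕ) * c + c)
  have hf : ∀ j, f j ∈ FeqNat m c := by
    intro j
    show hammingWeight (f j) = c
    unfold hammingWeight
    rw [← Fintype.card_fin c, ← Finset.card_univ]
    refine Finset.card_bij'
      (fun x hx => ⟨(e x : ℕ) - (j : ℕ) * c, ?_⟩)
      (fun b _ => e.symm ⟨(j : ℕ) * c + (b : ℕ), ?_⟩) ?_ ?_ ?_ ?_
    · simp only [mem_filter, f, decide_eq_true_eq] at hx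
      omega
    · have := hlt j; have := b.isLt; omega
    · intro a ha; exact Finset.mem_univ _
    · intro b _
      simp only [mem_filter, Finset.mem_univ, true_and, f, decide_eq_true_eq,
        Equiv.apply_symm_apply]
      have := b.isLt
      omega
    · intro a ha
      simp only [mem_filter, Finset.mem_univ, true_and, f, decide_eq_true_eq] at ha
      rw [Equiv.symm_apply_eq]
      apply Fin.ext
      simp only []
      omega
    · intro b _; simp
  let u : Fin (2 ^ m / c) → (Fin m → Bool) :=
    fun j => e.symm ⟨(j : ℕ) * c, by have := hlt j; omega⟩
  refine ⟨fun j => Q (u j), fun j => D (f j), fun j => h.1 (u j), ?_, ?_⟩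
  · intro j
    refine (h.2 (u j) (f j) (hf j)).1 ?_
    simp only [f, u, Equiv.apply_symm_apply, decide_eq_true_eq]
    omega
  · intro l j hlj
    refine (h.2 (u l) (f j) (hf j)).2 ?_
    simp only [f, u, Equiv.apply_symm_apply, decide_eq_false_iff_not, not_and, not_lt]
    intro h1
    by_contra h2
    push_neg at h2
    have h3 : (j : ℕ) ≤ (l : ℕ) := Nat.le_of_mul_le_mul_right h1 hc
    have h4 : (l : ℕ) < (j : ℕ) + 1 := by
      have : (l : ℕ) * c < ((j : ℕ) + 1) * c := by rw [add_mul]; omega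
      exact Nat.lt_of_mul_lt_mul_right this
    exact hlj (Fin.ext (by omega))

lemma arith_bound (c : ℕ) (hc : 0 < c) {m N : ℕ} (hN1 : 1 ≤ N)
    (hlt : (2:ℝ)^(m:ℕ) < 2 * c * N) (B : ℝ)
    (hlog : Real.logb 2 (N : ℝ) ≤ B) :
    (m : ℝ) ≤ Real.logb 2 (2 * c) + B := by
  have h2c : (0:ℝ) < 2 * c := by positivity
  have hNpos : (0:ℝ) < N := by exact_mod_cast hN1
  have h1 : (m : ℝ) = Real.logb 2 ((2:ℝ)^(m:ℕ)) := by
    rw [Real.logb_pow, Real.logb_self_eq_one (by norm_num : (1:ℝ) < 2), mul_one]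
  have h2 : Real.logb 2 ((2:ℝ)^(m:ℕ)) ≤ Real.logb 2 (2 * c * N) := by
    apply (Real.logb_le_logb (by norm_num) (by positivity) (by positivity)).mpr hlt.le
  have h3 : Real.logb 2 ((2:ℝ) * c * N) = Real.logb 2 (2 * c) + Real.logb 2 N := by
    rw [Real.logb_mul (ne_of_gt h2c) (ne_of_gt hNpos)]
  linarith

lemma exp_split (K : ℝ) (hK : 0 ≤ K) (x y : ℝ) (hx : 0 ≤ x) (hy : K + 1 ≤ (2:ℝ)^(y:ℝ)) :
    K + (2:ℝ)^(x:ℝ) ≤ (2:ℝ)^(x + y) := by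
  have hB : (1:ℝ) ≤ (2:ℝ)^(x:ℝ) := by
    rw [show (1:ℝ) = (2:ℝ)^(0:ℝ) by simp]
    exact Real.rpow_le_rpow_left_iff (by norm_num) |>.mpr hx
  have hsplit : (2:ℝ)^(x+y) = (2:ℝ)^(x:ℝ) * (2:ℝ)^(y:ℝ) := Real.rpow_add (by norm_num) _ _
  nlinarith [Real.rpow_pos_of_pos (show (0:ℝ) < 2 by norm_num) y]

/-- Converse, Case 1: assuming the identification converse at rate `C`,
for constant Hamming weight `S = c` the message length `m` of any BFC code can grow at
most exponentially in `n` with exponent `C`. -/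
theorem converse_case1 {𝒳 𝒴 : Type*}
    [Fintype 𝒳] [DecidableEq 𝒳] [Fintype 𝒴] [DecidableEq 𝒴]
    (W : ∀ n : ℕ, (Fin n → 𝒳) → (Fin n → 𝒴) → ℝ) (hW : ∀ n, IsChannel (W n))
    (C : ℝ) (hC : 0 < C)
    (hIDconv : ∀ μ1 μ2 : ℝ, 0 < μ1 → 0 < μ2 → μ1 + μ2 < 1 → ∀ δ : ℝ, 0 < δ →
      ∃ n₀ : ℕ, ∀ n ≥ n₀, ∀ (N : ℕ) (Qt : Fin N → (Fin n → 𝒳) → ℝ)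
        (Dt : Fin N → Finset (Fin n → 𝒴)),
        IsIDCode (W n) Qt Dt μ1 μ2 →
          Real.logb 2 (N : ℝ) ≤ (2:ℝ) ^ ((n : ℝ) * (C + δ)))
    (c : ℕ) (hc : 0 < c)
    (lam1 lam2 : ℝ) (hl1 : 0 < lam1) (hl2 : 0 < lam2) (hsum : lam1 + lam2 < 1) :
    ∀ δ' : ℝ, 0 < δ' → ∃ m₀ n₀ : ℕ, ∀ m ≥ m₀, ∀ n ≥ n₀,
      (∃ (Q : (Fin m → Bool) → (Fin n → 𝒳) → ℝ)
         (D : ((Fin m → Bool) → Bool) → Finset (Fin n → 𝒴)),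
         IsBFCCode (W n) (FeqNat m c) Q D lam1 lam2) →
      (m : ℝ) ≤ (2:ℝ) ^ ((n : ℝ) * (C + δ')) := by
  intro δ' hδ'
  obtain ⟨n₁, hn₁⟩ := hIDconv lam1 lam2 hl1 hl2 hsum (δ' / 2) (by linarith)
  set K : ℝ := Real.logb 2 (2 * c) with hKdef
  have hK : 0 ≤ K := Real.logb_nonneg (by norm_num) (by
    have : (1:ℝ) ≤ (c:ℝ) := by exact_mod_cast hc
    linarith)
  -- choose n₂ with K + 1 ≤ 2^(n * (δ'/2)) for n ≥ n₂
  have hb1 : (1:ℝ) < (2:ℝ) ^ (δ' / 2 : ℝ) := by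
    rw [show (1:ℝ) = (2:ℝ)^(0:ℝ) by simp]
    exact Real.rpow_lt_rpow_left_iff (by norm_num) |>.mpr (by linarith)
  obtain ⟨n₂, hn₂⟩ := pow_unbounded_of_one_lt (K + 1) hb1
  have hpow : ∀ n : ℕ, n₂ ≤ n → K + 1 ≤ (2:ℝ) ^ ((n : ℝ) * (δ' / 2)) := by
    intro n hn
    have h1 : (2:ℝ) ^ ((n : ℝ) * (δ' / 2)) = ((2:ℝ) ^ (δ' / 2 : ℝ)) ^ (n : ℕ) := by
      rw [mul_comm, Real.rpow_mul (by norm_num), Real.rpow_natCast]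
    rw [h1]
    calc K + 1 ≤ ((2:ℝ) ^ (δ' / 2 : ℝ)) ^ n₂ := hn₂.le
      _ ≤ ((2:ℝ) ^ (δ' / 2 : ℝ)) ^ n := pow_le_pow_right₀ hb1.le hn
  refine ⟨c + 1, max n₁ n₂, ?_⟩
  intro m hm n hn ⟨Q, D, hBFC⟩
  obtain ⟨Qt, Dt, hID⟩ := build_id hc (W n) Q D lam1 lam2 hBFC
  have hlog := hn₁ n (le_trans (le_max_left _ _) hn) (2 ^ m / c) Qt Dt hID
  -- 2c ≤ 2^m
  have h2c : 2 * c ≤ 2 ^ m := by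
    calc 2 * c ≤ 2 * 2 ^ c := by
          have := Nat.lt_two_pow_self (n := c); omega
      _ = 2 ^ (c + 1) := by ring
      _ ≤ 2 ^ m := Nat.pow_le_pow_right (by norm_num) hm
  set N := 2 ^ m / c with hNdef
  have hN1 : 1 ≤ N := by
    rw [hNdef, Nat.le_div_iff_mul_le hc]
    omega
  have hltN : 2 ^ m < 2 * c * N := by
    have hmod := Nat.div_add_mod (2 ^ m) c
    have hr : 2 ^ m % c < c := Nat.mod_lt _ hc
    have hca : c ≤ c * N := Nat.le_mul_of_pos_right c hN1
    calc 2 ^ m = c * N + 2 ^ m % c := hmod.symm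
      _ < c * N + c := by omega
      _ ≤ c * N + c * N := by omega
      _ = 2 * c * N := by ring
  have hltR : (2:ℝ) ^ (m : ℕ) < 2 * (c:ℝ) * N := by exact_mod_cast hltN
  have hmain : (m : ℝ) ≤ K + (2:ℝ) ^ ((n : ℝ) * (C + δ' / 2)) :=
    arith_bound c hc hN1 hltR _ hlog
  have hexp : K + (2:ℝ) ^ ((n : ℝ) * (C + δ' / 2)) ≤ (2:ℝ) ^ ((n : ℝ) * (C + δ')) := by
    have h1 : (n : ℝ) * (C + δ') = (n : ℝ) * (C + δ' / 2) + (n : ℝ) * (δ' / 2) := by ring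
    rw [h1]
    refine exp_split K hK _ _ ?_ (hpow n (le_trans (le_max_right _ _) hn))
    positivity
  linarith
end

section
/- Fix finite alphabets 𝒳, 𝒴 and a family of channels (W_n)_{n ∈ ℕ}. Assume the identification converse holds at rate C > 0: for all μ1, μ2 > 0 with μ1 + μ2 < 1 and all δ > 0, for every sufficiently large n, every (n, N, μ1, μ2) ID code for W_n satisfies log₂ N ≤ 2^{n(C+δ)}. Let c > 0 be a fixed real constant, γ ∈ (0, 1), and λ1, λ2 > 0 with λ1 + λ2 < 1, and for each m set S_m := ⌈c·2^{γ·m}⌉. Then for every δ' > 0 there exist m₀, n₀ such that for all m ≥ m₀ and n ≥ n₀: if an (n, m, ℱ_m^W(S_m), λ1, λ2) BFC code for W_n exists, then m ≤ ((C + δ')/γ)·n. (Converse, Case 6: for Hamming weight S = c·2^{γm}, the message length m can grow at most linearly in n with slope C/γ.) -/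
open Finset

/-! ### Auxiliary lemmas for the proof of `converse_case6` -/

lemma aux_choose_ratio : ∀ (k M S r : ℕ), k ≤ S → r * S ≤ M →
    r ^ k * Nat.choose (M - k) (S - k) ≤ Nat.choose M S := by
  intro k
  induction k with
  | zero => simp
  | succ k ih =>
    intro M S r hk hM
    rcases Nat.eq_zero_or_pos r with hr | hr
    · simp [hr]
    have hS : 1 ≤ S := le_trans (Nat.succ_le_succ (Nat.zero_le k)) hk
    have hM1 : 1 ≤ M := le_trans (Nat.one_le_iff_ne_zero.mpr (by positivity)) hM
    have key : r * (S - 1) + r = r * S := by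
      have hsub : (S - 1) + 1 = S := by omega
      calc r * (S-1) + r = r * ((S-1)+1) := by ring
        _ = r * S := by rw [hsub]
    have h1 : r * (S - 1) ≤ M - 1 := by omega
    have ih' := ih (M-1) (S-1) r (by omega) h1
    have e1 : M - (k+1) = (M-1) - k := by omega
    have e2 : S - (k+1) = (S-1) - k := by omega
    have id1 : M * Nat.choose (M-1) (S-1) = Nat.choose M S * S := by
      have hid := Nat.add_one_mul_choose_eq (M-1) (S-1)
      have eM : (M-1) + 1 = M := by omega
      have eS : (S-1) + 1 = S := by omega
      simp only [Nat.succ_eq_add_one, eM, eS] at hid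
      exact hid
    have last : r * Nat.choose (M-1) (S-1) ≤ Nat.choose M S := by
      have h2 : r * Nat.choose (M-1) (S-1) * S ≤ Nat.choose M S * S := by
        calc r * Nat.choose (M-1) (S-1) * S = (r * S) * Nat.choose (M-1) (S-1) := by ring
          _ ≤ M * Nat.choose (M-1) (S-1) := Nat.mul_le_mul_right _ hM
          _ = Nat.choose M S * S := id1
      exact Nat.le_of_mul_le_mul_right h2 hS
    calc r^(k+1) * Nat.choose (M-(k+1)) (S-(k+1))
        = r * (r^k * Nat.choose ((M-1)-k) ((S-1)-k)) := by rw [e1, e2]; ring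
      _ ≤ r * Nat.choose (M-1) (S-1) := Nat.mul_le_mul_left r ih'
      _ ≤ Nat.choose M S := last

lemma aux_choose_lt_two_pow {S j : ℕ} (hS : 1 ≤ S) (hj : 1 ≤ j) :
    Nat.choose S j < 2 ^ S := by
  rcases lt_or_ge S j with h | h
  · rw [Nat.choose_eq_zero_of_lt h]; positivity
  · have hsub : ({0, j} : Finset ℕ) ⊆ Finset.range (S+1) := by
      intro x hx; simp at hx
      rcases hx with rfl | rfl <;> simp <;> omega
    have hsum : ∑ i ∈ ({0, j} : Finset ℕ), Nat.choose S i
        ≤ ∑ i ∈ Finset.range (S+1), Nat.choose S i :=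
      Finset.sum_le_sum_of_subset hsub
    rw [Nat.sum_range_choose] at hsum
    rw [Finset.sum_pair (by omega : (0:ℕ) ≠ j)] at hsum
    simp at hsum
    omega

lemma aux_card_supersets {U : Type*} [Fintype U] [DecidableEq U] (T : Finset U) (S : ℕ) :
    ((Finset.univ.powersetCard S).filter (fun B => T ⊆ B)).card ≤
      Nat.choose (Fintype.card U - T.card) (S - T.card) := by
  have h : ((Finset.univ.powersetCard S).filter (fun B => T ⊆ B)).card ≤
      ((Finset.univ \ T).powersetCard (S - T.card)).card := by
    apply Finset.card_le_card_of_injOn (fun B => B \ T)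
    · intro B hB
      simp only [Finset.mem_coe, Finset.mem_filter, Finset.mem_powersetCard] at hB ⊢
      obtain ⟨⟨_, hcard⟩, hT⟩ := hB
      constructor
      · exact Finset.sdiff_subset_sdiff (Finset.subset_univ B) (le_refl T)
      · rw [Finset.card_sdiff_of_subset hT, hcard]
    · intro a ha b hb hab
      simp only [Finset.coe_filter, Set.mem_setOf_eq, Finset.mem_powersetCard] at ha hb
      have hab' : a \ T = b \ T := hab
      have huni : (a \ T) ∪ T = (b \ T) ∪ T := by rw [hab']
      rwa [Finset.sdiff_union_of_subset ha.2, Finset.sdiff_union_of_subset hb.2] at huni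
  rwa [Finset.card_powersetCard, Finset.card_sdiff_of_subset (Finset.subset_univ T),
    Finset.card_univ] at h

lemma aux_card_bad {U : Type*} [Fintype U] [DecidableEq U] (A : Finset U) (S t : ℕ)
    (hA : A.card = S) :
    ((Finset.univ.powersetCard S).filter (fun B => t + 1 ≤ (A ∩ B).card)).card ≤
      Nat.choose S (t+1) * Nat.choose (Fintype.card U - (t+1)) (S - (t+1)) := by
  have hsub : ((Finset.univ.powersetCard S).filter (fun B => t + 1 ≤ (A ∩ B).card)) ⊆
      (A.powersetCard (t+1)).biUnion
        (fun T => (Finset.univ.powersetCard S).filter (fun B => T ⊆ B)) := by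
    intro B hB
    simp only [Finset.mem_filter] at hB
    obtain ⟨hBmem, hcard⟩ := hB
    obtain ⟨T, hT, hTcard⟩ := Finset.exists_subset_card_eq hcard
    simp only [Finset.mem_biUnion, Finset.mem_powersetCard, Finset.mem_filter]
    exact ⟨T, ⟨hT.trans Finset.inter_subset_left, hTcard⟩,
      Finset.mem_powersetCard.mp hBmem, hT.trans Finset.inter_subset_right⟩
  calc ((Finset.univ.powersetCard S).filter (fun B => t + 1 ≤ (A ∩ B).card)).card
      ≤ ((A.powersetCard (t+1)).biUnion
        (fun T => (Finset.univ.powersetCard S).filter (fun B => T ⊆ B))).card :=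
        Finset.card_le_card hsub
    _ ≤ ∑ T ∈ A.powersetCard (t+1),
        ((Finset.univ.powersetCard S).filter (fun B => T ⊆ B)).card :=
        Finset.card_biUnion_le
    _ ≤ ∑ T ∈ A.powersetCard (t+1),
        Nat.choose (Fintype.card U - (t+1)) (S - (t+1)) := by
        apply Finset.sum_le_sum
        intro T hT
        have hTc : T.card = t+1 := (Finset.mem_powersetCard.mp hT).2
        have hcs := aux_card_supersets T S
        rwa [hTc] at hcs
    _ = Nat.choose S (t+1) * Nat.choose (Fintype.card U - (t+1)) (S - (t+1)) := by
        rw [Finset.sum_const, Finset.card_powersetCard, hA, smul_eq_mul]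

lemma aux_greedy {U : Type*} [Fintype U] [DecidableEq U] (S t : ℕ) (htS : t + 1 ≤ S) :
    ∀ g : ℕ, g * (Nat.choose S (t+1) * Nat.choose (Fintype.card U - (t+1)) (S - (t+1)))
        < Nat.choose (Fintype.card U) S →
    ∃ 𝒜 : Finset (Finset U), 𝒜.card = g ∧ (∀ A ∈ 𝒜, A.card = S) ∧
      (∀ A ∈ 𝒜, ∀ B ∈ 𝒜, A ≠ B → (A ∩ B).card ≤ t) := by
  intro g
  induction g with
  | zero => intro _; exact ⟨∅, by simp⟩
  | succ g ih =>
    intro hg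
    obtain ⟨𝒜, hcard, hsize, hinter⟩ :=
      ih (lt_of_le_of_lt (Nat.mul_le_mul_right _ (by omega)) hg)
    set K := Nat.choose S (t+1) * Nat.choose (Fintype.card U - (t+1)) (S - (t+1)) with hK
    set Bad := 𝒜.biUnion
      (fun A => (Finset.univ.powersetCard S).filter (fun B => t + 1 ≤ (A ∩ B).card)) with hBad
    have hBadcard : Bad.card ≤ g * K := by
      calc Bad.card ≤ ∑ A ∈ 𝒜, ((Finset.univ.powersetCard S).filter
            (fun B => t + 1 ≤ (A ∩ B).card)).card := Finset.card_biUnion_le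
        _ ≤ ∑ A ∈ 𝒜, K := Finset.sum_le_sum (fun A hA => aux_card_bad A S t (hsize A hA))
        _ = g * K := by rw [Finset.sum_const, hcard, smul_eq_mul]
    have hP : (Finset.univ.powersetCard S : Finset (Finset U)).card
        = Nat.choose (Fintype.card U) S := by
      rw [Finset.card_powersetCard, Finset.card_univ]
    have hlt : Bad.card < (Finset.univ.powersetCard S : Finset (Finset U)).card := by
      rw [hP]
      have h1 : (g+1) * K < Nat.choose (Fintype.card U) S := hg
      have hKg : g * K ≤ (g+1) * K := Nat.mul_le_mul_right _ (by omega)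
      omega
    obtain ⟨B, hBmem, hBnot⟩ : ∃ B ∈ Finset.univ.powersetCard S, B ∉ Bad := by
      by_contra h
      push_neg at h
      exact absurd (Finset.card_le_card h) (not_le.mpr hlt)
    have hBS : B.card = S := (Finset.mem_powersetCard.mp hBmem).2
    have hBgood : ∀ A ∈ 𝒜, (A ∩ B).card ≤ t := by
      intro A hA
      by_contra hcon
      exact hBnot (Finset.mem_biUnion.mpr ⟨A, hA, Finset.mem_filter.mpr ⟨hBmem, by omega⟩⟩)
    have hBnotin : B ∉ 𝒜 := by
      intro hin
      have hself := hBgood B hin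
      rw [Finset.inter_self, hBS] at hself
      omega
    refine ⟨insert B 𝒜, ?_, ?_, ?_⟩
    · rw [Finset.card_insert_of_notMem hBnotin, hcard]
    · intro A hA
      rcases Finset.mem_insert.mp hA with rfl | hA
      · exact hBS
      · exact hsize A hA
    · intro A hA A' hA' hne
      rcases Finset.mem_insert.mp hA with h1 | h1
      · rcases Finset.mem_insert.mp hA' with h2 | h2
        · exact absurd (h1.trans h2.symm) hne
        · subst h1; rw [Finset.inter_comm]; exact hBgood A' h2
      · rcases Finset.mem_insert.mp hA' with h2 | h2
        · subst h2; exact hBgood A h1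
        · exact hinter A h1 A' h2 hne

lemma aux_outProb_le_one {α β : Type*} [Fintype α] [Fintype β] {W : α → β → ℝ}
    (hW : IsChannel W) {Q : α → ℝ} (hQ : IsPMF Q) (D : Finset β) :
    outProb W Q D ≤ 1 := by
  unfold outProb
  calc ∑ x, Q x * ∑ y ∈ D, W x y ≤ ∑ x, Q x * 1 := by
        apply Finset.sum_le_sum
        intro x _
        apply mul_le_mul_of_nonneg_left _ (hQ.1 x)
        calc ∑ y ∈ D, W x y ≤ ∑ y, W x y :=
              Finset.sum_le_sum_of_subset_of_nonneg (Finset.subset_univ D)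
                (fun y _ _ => (hW x).1 y)
          _ = 1 := (hW x).2
    _ = 1 := by simp [hQ.2]

lemma aux_outProb_avg {α β : Type*} [Fintype α] {ι : Type*} (W : α → β → ℝ)
    (Q : ι → α → ℝ) (A : Finset ι) (S : ℝ) (D : Finset β) :
    outProb W (fun x => (∑ i ∈ A, Q i x) / S) D = (∑ i ∈ A, outProb W (Q i) D) / S := by
  simp only [outProb, div_mul_eq_mul_div, Finset.sum_mul, ← Finset.sum_div]
  rw [Finset.sum_comm]

lemma aux_bfc_to_id {𝒳 𝒴 : Type*} [Fintype 𝒳] [Fintype 𝒴] [DecidableEq 𝒴] {n m : ℕ}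
    {W : (Fin n → 𝒳) → (Fin n → 𝒴) → ℝ} (hW : IsChannel W)
    {S t : ℕ} (hS1 : 1 ≤ S)
    {Q : (Fin m → Bool) → (Fin n → 𝒳) → ℝ}
    {D : ((Fin m → Bool) → Bool) → Finset (Fin n → 𝒴)}
    {lam1 lam2 : ℝ} (hlam2 : 0 ≤ lam2)
    (hBFC : IsBFCCode W (FeqNat m S) Q D lam1 lam2)
    (𝒜 : Finset (Finset (Fin m → Bool)))
    (h𝒜size : ∀ A ∈ 𝒜, A.card = S)
    (h𝒜inter : ∀ A ∈ 𝒜, ∀ B ∈ 𝒜, A ≠ B → (A ∩ B).card ≤ t) :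
    ∃ (Qt : Fin 𝒜.card → (Fin n → 𝒳) → ℝ) (Dt : Fin 𝒜.card → Finset (Fin n → 𝒴)),
      IsIDCode W Qt Dt lam1 ((t:ℝ)/(S:ℝ) + lam2) := by
  classical
  have hQpmf := hBFC.1
  have hSr : (0:ℝ) < (S:ℝ) := by exact_mod_cast hS1
  set e := 𝒜.equivFin.symm with he
  have hfmem : ∀ j : Fin 𝒜.card,
      (fun i => decide (i ∈ (e j).1)) ∈ FeqNat m S := by
    intro j
    show hammingWeight (fun i => decide (i ∈ (e j).1)) = S
    unfold hammingWeight
    have hfilter : (Finset.univ.filter fun i => decide (i ∈ (e j).1) = true) = (e j).1 := by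
      ext i; simp
    rw [hfilter]
    exact h𝒜size _ (e j).2
  refine ⟨fun j x => (∑ i ∈ (e j).1, Q i x) / (S:ℝ),
          fun j => D (fun i => decide (i ∈ (e j).1)), ?_, ?_, ?_⟩
  · intro j
    constructor
    · intro x
      exact div_nonneg (Finset.sum_nonneg fun i _ => (hQpmf i).1 x) (le_of_lt hSr)
    · rw [← Finset.sum_div]
      rw [Finset.sum_comm]
      have hone : ∀ i ∈ (e j).1, ∑ x, Q i x = 1 := fun i _ => (hQpmf i).2
      rw [Finset.sum_congr rfl hone, Finset.sum_const, h𝒜size _ (e j).2,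
        nsmul_eq_mul, mul_one, div_self (ne_of_gt hSr)]
  · intro j
    rw [aux_outProb_avg, div_le_iff₀ hSr]
    calc ∑ i ∈ (e j).1, outProb W (Q i) (D fun i => decide (i ∈ (e j).1))ᶜ
        ≤ (e j).1.card • lam1 := by
          apply Finset.sum_le_card_nsmul
          intro i hi
          exact (hBFC.2 i _ (hfmem j)).1 (by simp [hi])
      _ = lam1 * S := by rw [h𝒜size _ (e j).2, nsmul_eq_mul]; ring
  · intro l j hlj
    have hne : (e l).1 ≠ (e j).1 := fun h => hlj (e.injective (Subtype.ext h))
    rw [aux_outProb_avg, div_le_iff₀ hSr]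
    have hsplit : ∑ i ∈ (e l).1 \ (e j).1, outProb W (Q i) (D fun i => decide (i ∈ (e j).1))
        + ∑ i ∈ (e l).1 ∩ (e j).1, outProb W (Q i) (D fun i => decide (i ∈ (e j).1))
        = ∑ i ∈ (e l).1, outProb W (Q i) (D fun i => decide (i ∈ (e j).1)) := by
      rw [← Finset.sdiff_inter_self_left (e l).1 (e j).1]
      exact Finset.sum_sdiff Finset.inter_subset_left
    have hb1 : ∑ i ∈ (e l).1 ∩ (e j).1, outProb W (Q i) (D fun i => decide (i ∈ (e j).1))
        ≤ (t:ℝ) := by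
      calc ∑ i ∈ (e l).1 ∩ (e j).1, outProb W (Q i) (D fun i => decide (i ∈ (e j).1))
          ≤ ((e l).1 ∩ (e j).1).card • (1:ℝ) := by
            apply Finset.sum_le_card_nsmul
            intro i _
            exact aux_outProb_le_one hW (hQpmf i) _
        _ = (((e l).1 ∩ (e j).1).card : ℝ) := by rw [nsmul_eq_mul, mul_one]
        _ ≤ (t:ℝ) := by
            exact_mod_cast h𝒜inter _ (e l).2 _ (e j).2 hne
    have hb2 : ∑ i ∈ (e l).1 \ (e j).1, outProb W (Q i) (D fun i => decide (i ∈ (e j).1))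
        ≤ (S:ℝ) * lam2 := by
      calc ∑ i ∈ (e l).1 \ (e j).1, outProb W (Q i) (D fun i => decide (i ∈ (e j).1))
          ≤ ((e l).1 \ (e j).1).card • lam2 := by
            apply Finset.sum_le_card_nsmul
            intro i hi
            rw [Finset.mem_sdiff] at hi
            exact (hBFC.2 i _ (hfmem j)).2 (by simp [hi.2])
        _ = (((e l).1 \ (e j).1).card : ℝ) * lam2 := by rw [nsmul_eq_mul]
        _ ≤ (S:ℝ) * lam2 := by
            apply mul_le_mul_of_nonneg_right _ hlam2
            have h1 : ((e l).1 \ (e j).1).card ≤ (e l).1.card :=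
              Finset.card_le_card (Finset.sdiff_subset)
            have h2 := h𝒜size _ (e l).2
            exact_mod_cast h2 ▸ h1
    have hgoal : ((t:ℝ)/(S:ℝ) + lam2) * (S:ℝ) = (t:ℝ) + (S:ℝ)*lam2 := by
      field_simp
    rw [hgoal]
    linarith

lemma aux_two_rpow_tendsto (a : ℝ) (ha : 0 < a) :
    Filter.Tendsto (fun k : ℕ => (2:ℝ) ^ (a * (k:ℝ))) Filter.atTop Filter.atTop := by
  have h1 : (1:ℝ) < (2:ℝ) ^ a := by
    rw [show (1:ℝ) = (2:ℝ)^(0:ℝ) by simp]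
    exact Real.rpow_lt_rpow_of_exponent_lt (by norm_num) ha
  have h2 := tendsto_pow_atTop_atTop_of_one_lt h1
  refine h2.congr fun k => ?_
  rw [← Real.rpow_natCast ((2:ℝ)^a) k, ← Real.rpow_mul (by norm_num)]

set_option maxHeartbeats 2000000 in
/-- Converse, Case 6: assuming the identification converse at rate `C`,
for Hamming weight `S_m = ⌈c·2^{γm}⌉` the message length `m` of any BFC code can grow
at most linearly in `n` with slope `C/γ`. -/
theorem converse_case6 {𝒳 𝒴 : Type*}
    [Fintype 𝒳] [DecidableEq 𝒳] [Fintype 𝒴] [DecidableEq 𝒴]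
    (W : ∀ n : ℕ, (Fin n → 𝒳) → (Fin n → 𝒴) → ℝ) (hW : ∀ n, IsChannel (W n))
    (C : ℝ) (hC : 0 < C)
    (hIDconv : ∀ μ1 μ2 : ℝ, 0 < μ1 → 0 < μ2 → μ1 + μ2 < 1 → ∀ δ : ℝ, 0 < δ →
      ∃ n₀ : ℕ, ∀ n ≥ n₀, ∀ (N : ℕ) (Qt : Fin N → (Fin n → 𝒳) → ℝ)
        (Dt : Fin N → Finset (Fin n → 𝒴)),
        IsIDCode (W n) Qt Dt μ1 μ2 →
          Real.logb 2 (N : ℝ) ≤ (2:ℝ) ^ ((n : ℝ) * (C + δ)))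
    (c : ℝ) (hc : 0 < c) (γ : ℝ) (hγ0 : 0 < γ) (hγ1 : γ < 1)
    (lam1 lam2 : ℝ) (hl1 : 0 < lam1) (hl2 : 0 < lam2) (hsum : lam1 + lam2 < 1) :
    ∀ δ' : ℝ, 0 < δ' → ∃ m₀ n₀ : ℕ, ∀ m ≥ m₀, ∀ n ≥ n₀,
      (∃ (Q : (Fin m → Bool) → (Fin n → 𝒳) → ℝ)
         (D : ((Fin m → Bool) → Bool) → Finset (Fin n → 𝒴)),
         IsBFCCode (W n) (FeqNat m ⌈c * (2:ℝ) ^ (γ * (m : ℝ))⌉₊) Q D lam1 lam2) →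
      (m : ℝ) ≤ ((C + δ') / γ) * (n : ℝ) := by
  intro δ' hδ'
  set ε : ℝ := (1 - lam1 - lam2)/2 with hεdef
  have hε0 : 0 < ε := by rw [hεdef]; linarith
  have hε2 : ε < 1/2 := by rw [hεdef]; linarith
  set K : ℕ := ⌈2/ε⌉₊ with hKdef
  have hKε : 2 ≤ (K:ℝ) * ε := by
    have h := Nat.le_ceil (2/ε)
    have h2 : 2/ε * ε ≤ (K:ℝ) * ε := mul_le_mul_of_nonneg_right h (le_of_lt hε0)
    rwa [div_mul_cancel₀ _ (ne_of_gt hε0)] at h2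
  obtain ⟨n₀', hID⟩ := hIDconv lam1 (lam2 + ε) hl1 (by linarith)
    (by rw [hεdef]; linarith) (δ'/2) (by linarith)
  obtain ⟨n₁, hn₁⟩ := Filter.eventually_atTop.mp
    ((aux_two_rpow_tendsto (δ'/2) (by linarith)).eventually_ge_atTop (1/c))
  obtain ⟨m₀, hm₀⟩ := Filter.eventually_atTop.mp
    ((aux_two_rpow_tendsto (1-γ) (by linarith)).eventually_ge_atTop ((2:ℝ)^K * (c+1)))
  refine ⟨m₀, max n₀' n₁, ?_⟩
  rintro m hm n hn ⟨Q, D, hBFC⟩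
  by_contra hcon
  push_neg at hcon
  set S : ℕ := ⌈c * (2:ℝ) ^ (γ * (m:ℝ))⌉₊ with hSdef
  have hpow_pos : (0:ℝ) < (2:ℝ)^(γ*(m:ℝ)) := Real.rpow_pos_of_pos (by norm_num) _
  have hS1 : 1 ≤ S := Nat.ceil_pos.mpr (by positivity)
  have hSr0 : (0:ℝ) < (S:ℝ) := by exact_mod_cast hS1
  set t : ℕ := ⌊ε * (S:ℝ)⌋₊ with htdef
  have ht_le : (t:ℝ) ≤ ε * S := Nat.floor_le (by positivity)
  have htS : t + 1 ≤ S := by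
    have h2 : ε * S < S := by nlinarith
    have h3 : (t:ℝ) < (S:ℝ) := lt_of_le_of_lt ht_le h2
    have h4 : t < S := by exact_mod_cast h3
    omega
  have hm' := hm₀ m hm
  have hrS : 2^K * S ≤ 2^m := by
    have hSle' : (S:ℝ) ≤ c * (2:ℝ)^(γ*(m:ℝ)) + 1 :=
      le_of_lt (Nat.ceil_lt_add_one (by positivity))
    have hone_le : (1:ℝ) ≤ (2:ℝ)^(γ*(m:ℝ)) := by
      rw [show (1:ℝ) = (2:ℝ)^(0:ℝ) by simp]
      exact Real.rpow_le_rpow_of_exponent_le (by norm_num) (by positivity)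
    have hcalc : ((2:ℝ)^K) * (S:ℝ) ≤ (2:ℝ)^(m:ℝ) := by
      calc ((2:ℝ)^K) * (S:ℝ) ≤ (2:ℝ)^K * (c * (2:ℝ)^(γ*(m:ℝ)) + 1) := by
            apply mul_le_mul_of_nonneg_left hSle' (by positivity)
        _ ≤ (2:ℝ)^K * ((c+1) * (2:ℝ)^(γ*(m:ℝ))) := by
            apply mul_le_mul_of_nonneg_left _ (by positivity)
            nlinarith
        _ = ((2:ℝ)^K * (c+1)) * (2:ℝ)^(γ*(m:ℝ)) := by ring
        _ ≤ (2:ℝ)^((1-γ)*(m:ℝ)) * (2:ℝ)^(γ*(m:ℝ)) := by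
            apply mul_le_mul_of_nonneg_right hm' (le_of_lt hpow_pos)
        _ = (2:ℝ)^(m:ℝ) := by
            rw [← Real.rpow_add (by norm_num)]; ring_nf
    have hfin : ((2^K * S : ℕ):ℝ) ≤ ((2^m : ℕ):ℝ) := by
      push_cast
      rw [← Real.rpow_natCast 2 m]
      exact hcalc
    exact_mod_cast hfin
  have h2S : 2*S ≤ K*(t+1) := by
    have hlt : ε*(S:ℝ) < (t:ℝ)+1 := Nat.lt_floor_add_one _
    have hK0 : (0:ℝ) ≤ (K:ℝ) := Nat.cast_nonneg K
    have hr : (2:ℝ)*S ≤ (K:ℝ)*((t:ℝ)+1) := by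
      nlinarith [mul_le_mul_of_nonneg_left hlt.le hK0,
        mul_le_mul_of_nonneg_right hKε hSr0.le]
    have hr' : ((2*S : ℕ):ℝ) ≤ ((K*(t+1) : ℕ):ℝ) := by push_cast; linarith
    exact_mod_cast hr'
  have hSle2m : S ≤ 2^m := le_trans (Nat.le_mul_of_pos_left S (by positivity)) hrS
  have hX1 : 0 < Nat.choose (2^m-(t+1)) (S-(t+1)) := Nat.choose_pos (by omega)
  have hchain : 2^S * (Nat.choose S (t+1) * Nat.choose (2^m-(t+1)) (S-(t+1)))
      < Nat.choose (2^m) S := by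
    have hA := aux_choose_ratio (t+1) (2^m) S (2^K) htS hrS
    have hB : Nat.choose S (t+1) < 2^S := aux_choose_lt_two_pow hS1 (by omega)
    have hC2 : 2^S * Nat.choose S (t+1) < 2^(2*S) := by
      have he : (2:ℕ)^(2*S) = 2^S * 2^S := by rw [two_mul, pow_add]
      rw [he]
      exact mul_lt_mul_of_pos_left hB (by positivity)
    have hD2 : (2:ℕ)^(2*S) ≤ (2^K)^(t+1) := by
      rw [← pow_mul]
      exact Nat.pow_le_pow_right (by norm_num) h2S
    calc 2^S * (Nat.choose S (t+1) * Nat.choose (2^m-(t+1)) (S-(t+1)))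
        = (2^S * Nat.choose S (t+1)) * Nat.choose (2^m-(t+1)) (S-(t+1)) := by ring
      _ < 2^(2*S) * Nat.choose (2^m-(t+1)) (S-(t+1)) := mul_lt_mul_of_pos_right hC2 hX1
      _ ≤ (2^K)^(t+1) * Nat.choose (2^m-(t+1)) (S-(t+1)) := Nat.mul_le_mul_right _ hD2
      _ ≤ Nat.choose (2^m) S := hA
  have hMcard : Fintype.card (Fin m → Bool) = 2^m := by simp
  obtain ⟨𝒜, h𝒜card, h𝒜size, h𝒜inter⟩ :=
    aux_greedy (U := Fin m → Bool) S t htS (2^S) (by rw [hMcard]; exact hchain)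
  obtain ⟨Qt, Dt, hIDc⟩ := aux_bfc_to_id (hW n) hS1 hl2.le hBFC 𝒜 h𝒜size h𝒜inter
  have hIDc' : IsIDCode (W n) Qt Dt lam1 (lam2 + ε) := by
    obtain ⟨hp, hmiss, hcross⟩ := hIDc
    refine ⟨hp, hmiss, fun l j hlj => le_trans (hcross l j hlj) ?_⟩
    have : (t:ℝ)/(S:ℝ) ≤ ε := by
      rw [div_le_iff₀ hSr0]
      nlinarith
    linarith
  have hn0' : n ≥ n₀' := le_trans (le_max_left _ _) hn
  have hn1 : n ≥ n₁ := le_trans (le_max_right _ _) hn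
  have hlog := hID n hn0' 𝒜.card Qt Dt hIDc'
  have hlogN : Real.logb 2 (𝒜.card : ℝ) = (S:ℝ) := by
    rw [h𝒜card]
    push_cast
    rw [← Real.rpow_natCast 2 S, Real.logb_rpow (by norm_num) (by norm_num)]
  rw [hlogN] at hlog
  -- final numeric contradiction
  have hγm : (C+δ')*(n:ℝ) < γ*(m:ℝ) := by
    have h1 : γ * (((C+δ')/γ)*(n:ℝ)) < γ * (m:ℝ) := mul_lt_mul_of_pos_left hcon hγ0
    have h2 : γ * (((C+δ')/γ)*(n:ℝ)) = (C+δ')*(n:ℝ) := by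
      rw [← mul_assoc, mul_comm γ, div_mul_cancel₀ _ (ne_of_gt hγ0)]
    linarith
  have key1 : (2:ℝ)^((C+δ')*(n:ℝ)) < (2:ℝ)^(γ*(m:ℝ)) :=
    Real.rpow_lt_rpow_of_exponent_lt (by norm_num) hγm
  have key2 : 1/c ≤ (2:ℝ)^((δ'/2)*(n:ℝ)) := hn₁ n hn1
  have hSge : c * (2:ℝ)^(γ*(m:ℝ)) ≤ (S:ℝ) := Nat.le_ceil _
  have hsplitpow : (2:ℝ)^((C+δ')*(n:ℝ))
      = (2:ℝ)^((n:ℝ)*(C+δ'/2)) * (2:ℝ)^((δ'/2)*(n:ℝ)) := by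
    rw [← Real.rpow_add (by norm_num)]; ring_nf
  have hp1 : (0:ℝ) < (2:ℝ)^((n:ℝ)*(C+δ'/2)) := Real.rpow_pos_of_pos (by norm_num) _
  have hp2 : (0:ℝ) < (2:ℝ)^((δ'/2)*(n:ℝ)) := Real.rpow_pos_of_pos (by norm_num) _
  have hstep : (2:ℝ)^((n:ℝ)*(C+δ'/2)) ≤ c * (2:ℝ)^((C+δ')*(n:ℝ)) := by
    rw [hsplitpow]
    have h1 : 1 ≤ c * (2:ℝ)^((δ'/2)*(n:ℝ)) := by
      rw [div_le_iff₀ hc] at key2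
      linarith
    nlinarith
  have hfinal : (2:ℝ)^((n:ℝ)*(C+δ'/2)) < (S:ℝ) := by
    calc (2:ℝ)^((n:ℝ)*(C+δ'/2)) ≤ c * (2:ℝ)^((C+δ')*(n:ℝ)) := hstep
      _ < c * (2:ℝ)^(γ*(m:ℝ)) := mul_lt_mul_of_pos_left key1 hc
      _ ≤ (S:ℝ) := hSge
  linarith
end
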